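/- For every p ∈ [2, ∞) and every x > 0, one has exp((1/p)·(x/tanh_p(x) − 1)) < sinh_p(x)/x < exp(x/tanh_p(x) − 1). -/

import Mathlib

open Real Set Filter Topology

/-- Generalized inverse sine: `arcsinp p x = ∫₀ˣ (1 - tᵖ)^(-1/p) dt`. -/
noncomputable def arcsinp (p x : ℝ) : ℝ := ∫ t in (0:ℝ)..x, (1 - t ^ p) ^ (-(1/p))

/-- The generalized half-pi: `π_p/2 = arcsin_p 1`. -/
noncomputable def pipHalf (p : ℝ) : ℝ := arcsinp p 1

/-- Generalized sine: the inverse of `arcsinp p` viewed as a map on `[0,1]`. -/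
noncomputable def sinp (p : ℝ) : ℝ → ℝ := Function.invFunOn (arcsinp p) (Set.Icc 0 1)

/-- Generalized cosine. -/
noncomputable def cosp (p x : ℝ) : ℝ := (1 - (sinp p x) ^ p) ^ (1/p : ℝ)

/-- Generalized tangent. -/
noncomputable def tanp (p x : ℝ) : ℝ := sinp p x / cosp p x

/-- Generalized inverse hyperbolic sine: `arsinhp p x = ∫₀ˣ (1 + tᵖ)^(-1/p) dt`. -/
noncomputable def arsinhp (p x : ℝ) : ℝ := ∫ t in (0:ℝ)..x, (1 + t ^ p) ^ (-(1/p))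

/-- Generalized hyperbolic sine: the inverse of `arsinhp p` viewed as a map on `[0,∞)`. -/
noncomputable def sinhp (p : ℝ) : ℝ → ℝ := Function.invFunOn (arsinhp p) (Set.Ici 0)

/-- Generalized hyperbolic cosine. -/
noncomputable def coshp (p x : ℝ) : ℝ := (1 + (sinhp p x) ^ p) ^ (1/p : ℝ)

/-- Generalized hyperbolic tangent. -/
noncomputable def tanhp (p x : ℝ) : ℝ := sinhp p x / coshp p x

/-!
Put `y = sinh_p x`, so that `x = arsinh_p y` and `x / tanh_p x = R y` with
`R y = arsinh_p y * (1 + y^p)^(1/p) / y`. Both inequalities then compare `log (y / arsinh_p y)`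
with `R y - 1` on `(0, ∞)`. Both sides tend to `0` as `y → 0⁺`, and
`y R' = 1 - R / (1 + y^p)`, `y (log (y / arsinh_p y))' = 1 - 1 / R`, so each inequality reduces
to the sign of a derivative. For the upper bound this sign is that of `1 + y^p - R²`, positive
because `arsinh_p y < y` and `p ≥ 2`. For the lower bound it is that of
`R² + (p - 1)(1 + y^p) R - p (1 + y^p)`, which vanishes to high order at `0`; it is reached by
the same derivative argument through the successively sharper lower bounds
`(1 + y^p) / (1 + p y^p) < R` and `(p + 1)(1 + y^p) / (p + 1 + p y^p) < R`.
-/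

theorem pos_of_tendsto_of_hasDerivAt_pos {F F' : ℝ → ℝ} (hF : Tendsto F (𝓝[>] 0) (𝓝 0))
    (hF' : ∀ y, 0 < y → HasDerivAt F (F' y) y) (hpos : ∀ y, 0 < y → 0 < F' y)
    {y : ℝ} (hy : 0 < y) : 0 < F y := by
  have hmono : StrictMonoOn F (Ioi 0) :=
    strictMonoOn_of_deriv_pos (convex_Ioi 0) (fun t ht => (hF' t ht).continuousAt.continuousWithinAt)
      (fun t ht => by rw [interior_Ioi] at ht; rw [(hF' t ht).deriv]; exact hpos t ht)
  have hhalf : 0 ≤ F (y / 2) := by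
    refine le_of_tendsto hF ?_
    filter_upwards [Ioo_mem_nhdsGT (half_pos hy)] with t ht
    exact (hmono ht.1 (half_pos hy) ht.2).le
  linarith [hmono (half_pos hy) (show y ∈ Ioi 0 from hy) (half_lt_self hy)]

theorem pos_of_continuousAt_of_hasDerivAt_pos {F F' : ℝ → ℝ} (h0 : F 0 = 0)
    (hc : ContinuousAt F 0) (hF' : ∀ y, 0 < y → HasDerivAt F (F' y) y)
    (hpos : ∀ y, 0 < y → 0 < F' y) {y : ℝ} (hy : 0 < y) : 0 < F y := by
  have hlim := hc.tendsto
  rw [h0] at hlim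
  exact pos_of_tendsto_of_hasDerivAt_pos (hlim.mono_left nhdsWithin_le_nhds) hF' hpos hy

theorem tendsto_id_mul_nhdsGT_zero {g : ℝ → ℝ} {L : ℝ} (hg : Tendsto g (𝓝[>] 0) (𝓝 L)) :
    Tendsto (fun y => y * g y) (𝓝[>] 0) (𝓝 0) := by
  simpa using (tendsto_nhdsWithin_of_tendsto_nhds tendsto_id).mul hg

section

variable {p : ℝ}

theorem continuousAt_one_add_rpow_rpow (hp : 0 < p) (e : ℝ) {t : ℝ} (ht : 0 ≤ t) :
    ContinuousAt (fun t : ℝ => (1 + t ^ p) ^ e) t := by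
  have hpos : 0 < 1 + t ^ p := by positivity
  exact ((continuousAt_rpow_const t p (Or.inr hp.le)).const_add 1).rpow_const (Or.inl hpos.ne')

theorem hasDerivAt_arsinhp (hp : 0 < p) {y : ℝ} (hy : 0 ≤ y) :
    HasDerivAt (arsinhp p) ((1 + y ^ p) ^ (1 / p))⁻¹ y := by
  have hcont : ∀ t, 0 ≤ t → ContinuousAt (fun t : ℝ => (1 + t ^ p) ^ (-(1 / p))) t :=
    fun t ht => continuousAt_one_add_rpow_rpow hp _ ht
  rw [← Real.rpow_neg (by positivity)]
  refine intervalIntegral.integral_hasDerivAt_right ?_ ?_ (hcont y hy)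
  · refine ContinuousOn.intervalIntegrable fun t ht => (hcont t ?_).continuousWithinAt
    rw [uIcc_of_le hy] at ht
    exact ht.1
  · exact (Measurable.stronglyMeasurable (by fun_prop)).stronglyMeasurableAtFilter

theorem hasDerivAt_one_add_rpow_rpow_inv (hp : p ≠ 0) {y : ℝ} (hy : 0 < y) :
    HasDerivAt (fun t : ℝ => (1 + t ^ p) ^ (1 / p))
      (y ^ (p - 1) * (1 + y ^ p) ^ (1 / p) / (1 + y ^ p)) y := by
  have hpos : 0 < 1 + y ^ p := by positivity
  convert ((Real.hasDerivAt_rpow_const (p := p) (Or.inl hy.ne')).const_add 1).rpow_const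
    (p := 1 / p) (Or.inl hpos.ne') using 1
  rw [Real.rpow_sub hpos, Real.rpow_one]
  field_simp

theorem arsinhp_zero : arsinhp p 0 = 0 := intervalIntegral.integral_same

theorem continuousAt_arsinhp (hp : 0 < p) {y : ℝ} (hy : 0 ≤ y) : ContinuousAt (arsinhp p) y :=
  (hasDerivAt_arsinhp hp hy).continuousAt

theorem arsinhp_pos (hp : 0 < p) {y : ℝ} (hy : 0 < y) : 0 < arsinhp p y :=
  pos_of_continuousAt_of_hasDerivAt_pos arsinhp_zero (continuousAt_arsinhp hp le_rfl)
    (fun t ht => hasDerivAt_arsinhp hp ht.le) (fun t ht => by positivity) hy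

theorem arsinhp_lt_self (hp : 0 < p) {y : ℝ} (hy : 0 < y) : arsinhp p y < y := by
  have key := pos_of_continuousAt_of_hasDerivAt_pos (F := fun y => y - arsinhp p y)
    (by simp [arsinhp_zero]) (continuousAt_id.sub (continuousAt_arsinhp hp le_rfl))
    (fun t ht => (hasDerivAt_id t).sub (hasDerivAt_arsinhp hp ht.le)) (fun t ht => ?_) hy
  · linarith
  · have h1 : 1 < (1 + t ^ p) ^ (1 / p) :=
      Real.one_lt_rpow (by linarith [Real.rpow_pos_of_pos ht p]) (by positivity)
    simpa using inv_lt_one_of_one_lt₀ h1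

theorem tendsto_rpow_nhdsGT_zero (hp : 0 < p) : Tendsto (fun y : ℝ => y ^ p) (𝓝[>] 0) (𝓝 0) := by
  simpa [Real.zero_rpow hp.ne'] using
    (continuousAt_rpow_const 0 p (Or.inr hp.le)).tendsto.mono_left nhdsWithin_le_nhds

theorem tendsto_arsinhp_div_self (hp : 0 < p) :
    Tendsto (fun y => arsinhp p y / y) (𝓝[>] 0) (𝓝 1) := by
  have h := (hasDerivAt_arsinhp hp le_rfl).tendsto_slope_zero_right
  simpa [arsinhp_zero, Real.zero_rpow hp.ne', div_eq_inv_mul] using h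

theorem log_one_add_le_arsinhp (hp : 1 ≤ p) {y : ℝ} (hy : 0 ≤ y) :
    Real.log (1 + y) ≤ arsinhp p y := by
  have hp0 : 0 < p := by linarith
  have hlog : Real.log (1 + y) = ∫ t in (0:ℝ)..y, (1 + t)⁻¹ := by
    rw [intervalIntegral.integral_comp_add_left (fun t => t⁻¹), add_zero,
      integral_inv_of_pos one_pos (by linarith), div_one]
  rw [hlog, arsinhp]
  refine intervalIntegral.integral_mono_on hy ?_ ?_ fun t ht => ?_
  · exact ContinuousOn.intervalIntegrable_of_Icc hy <|
      ContinuousOn.inv₀ (by fun_prop) fun t ht => (show (0:ℝ) < 1 + t by linarith [ht.1]).ne'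
  · exact ContinuousOn.intervalIntegrable_of_Icc hy fun t ht =>
      (continuousAt_one_add_rpow_rpow hp0 _ ht.1).continuousWithinAt
  · rw [Real.rpow_neg (by positivity [ht.1])]
    exact inv_anti₀ (by positivity [ht.1])
      (by simpa using Real.rpow_add_rpow_le_add zero_le_one ht.1 hp)

theorem exists_arsinhp_eq (hp : 1 ≤ p) {x : ℝ} (hx : 0 ≤ x) :
    ∃ y ∈ Ici (0:ℝ), arsinhp p y = x := by
  have hp0 : 0 < p := by linarith
  have hY : 0 ≤ Real.exp x - 1 := by linarith [Real.add_one_le_exp x]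
  have hAY : x ≤ arsinhp p (Real.exp x - 1) := by
    simpa using log_one_add_le_arsinhp hp hY
  obtain ⟨y, hy, hyx⟩ := intermediate_value_Icc hY
    (fun t ht => (continuousAt_arsinhp hp0 ht.1).continuousWithinAt)
    (show x ∈ Icc (arsinhp p 0) _ by rw [arsinhp_zero]; exact ⟨hx, hAY⟩)
  exact ⟨y, hy.1, hyx⟩

theorem arsinhp_sinhp (hp : 1 ≤ p) {x : ℝ} (hx : 0 ≤ x) : arsinhp p (sinhp p x) = x :=
  Function.invFunOn_eq (exists_arsinhp_eq hp hx)

theorem sinhp_pos (hp : 1 ≤ p) {x : ℝ} (hx : 0 < x) : 0 < sinhp p x := by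
  have hnonneg : 0 ≤ sinhp p x := Function.invFunOn_mem (exists_arsinhp_eq hp hx.le)
  refine hnonneg.lt_of_ne fun h => hx.ne ?_
  rw [← arsinhp_sinhp hp hx.le, ← h, arsinhp_zero]

noncomputable def cothpRatio (p y : ℝ) : ℝ := arsinhp p y * (1 + y ^ p) ^ (1 / p) / y

theorem div_tanhp_eq_cothpRatio (hp : 1 ≤ p) {x : ℝ} (hx : 0 ≤ x) :
    x / tanhp p x = cothpRatio p (sinhp p x) := by
  rw [tanhp, coshp, cothpRatio, arsinhp_sinhp hp hx, div_div_eq_mul_div]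

theorem cothpRatio_pos (hp : 0 < p) {y : ℝ} (hy : 0 < y) : 0 < cothpRatio p y := by
  have := arsinhp_pos hp hy
  unfold cothpRatio
  positivity

theorem cothpRatio_sq_lt (hp : 2 ≤ p) {y : ℝ} (hy : 0 < y) : cothpRatio p y ^ 2 < 1 + y ^ p := by
  have hp0 : 0 < p := by linarith
  have hY : 1 ≤ 1 + y ^ p := by linarith [Real.rpow_nonneg hy.le p]
  have hC : 0 < (1 + y ^ p) ^ (1 / p) := by positivity
  have hR : cothpRatio p y < (1 + y ^ p) ^ (1 / p) := by
    rw [cothpRatio, div_lt_iff₀ hy, mul_comm]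
    exact mul_lt_mul_of_pos_left (arsinhp_lt_self hp0 hy) hC
  have hC2 : ((1 + y ^ p) ^ (1 / p)) ^ 2 ≤ 1 + y ^ p := by
    rw [← Real.rpow_natCast, ← Real.rpow_mul (by positivity)]
    simpa using Real.rpow_le_rpow_of_exponent_le hY (show 1 / p * (2 : ℕ) ≤ 1 by
      rw [div_mul_eq_mul_div, div_le_one hp0]; push_cast; linarith)
  calc cothpRatio p y ^ 2 < ((1 + y ^ p) ^ (1 / p)) ^ 2 :=
        pow_lt_pow_left₀ hR (cothpRatio_pos hp0 hy).le two_ne_zero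
    _ ≤ 1 + y ^ p := hC2

theorem hasDerivAt_cothpRatio (hp : 0 < p) {y : ℝ} (hy : 0 < y) :
    HasDerivAt (cothpRatio p) ((1 - cothpRatio p y / (1 + y ^ p)) / y) y := by
  have h := ((hasDerivAt_arsinhp hp hy.le).mul (hasDerivAt_one_add_rpow_rpow_inv hp.ne' hy)).div
    (hasDerivAt_id y) hy.ne'
  refine h.congr_deriv ?_
  have hC : 0 < (1 + y ^ p) ^ (1 / p) := by positivity
  simp only [cothpRatio, Pi.mul_apply, id]
  rw [Real.rpow_sub_one hy.ne']
  field_simp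
  ring

theorem hasDerivAt_log_div_arsinhp (hp : 0 < p) {y : ℝ} (hy : 0 < y) :
    HasDerivAt (fun y => Real.log (y / arsinhp p y)) ((1 - (cothpRatio p y)⁻¹) / y) y := by
  have hA := arsinhp_pos hp hy
  have h := ((hasDerivAt_id y).div (hasDerivAt_arsinhp hp hy.le) hA.ne').log
    (div_pos hy hA).ne'
  refine h.congr_deriv ?_
  have hC : 0 < (1 + y ^ p) ^ (1 / p) := by positivity
  simp only [cothpRatio, Pi.div_apply, id]
  field_simp

theorem tendsto_cothpRatio (hp : 0 < p) : Tendsto (cothpRatio p) (𝓝[>] 0) (𝓝 1) := by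
  have hC : Tendsto (fun y : ℝ => (1 + y ^ p) ^ (1 / p)) (𝓝[>] 0) (𝓝 1) := by
    have := (continuousAt_one_add_rpow_rpow hp (1 / p) le_rfl).tendsto.mono_left
      (nhdsWithin_le_nhds (s := Ioi 0))
    simpa [Real.zero_rpow hp.ne'] using this
  have h := (tendsto_arsinhp_div_self hp).mul hC
  rw [one_mul] at h
  refine h.congr fun y => ?_
  rw [cothpRatio, mul_div_right_comm]

theorem tendsto_log_div_arsinhp (hp : 0 < p) :
    Tendsto (fun y => Real.log (y / arsinhp p y)) (𝓝[>] 0) (𝓝 0) := by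
  have h := ((tendsto_arsinhp_div_self hp).inv₀ one_ne_zero).log (by norm_num : (1:ℝ)⁻¹ ≠ 0)
  simpa using h

theorem log_div_arsinhp_lt_cothpRatio_sub_one (hp : 2 ≤ p) {y : ℝ} (hy : 0 < y) :
    Real.log (y / arsinhp p y) < cothpRatio p y - 1 := by
  have hp0 : 0 < p := by linarith
  have hlim := ((tendsto_cothpRatio hp0).sub_const 1).sub (tendsto_log_div_arsinhp hp0)
  rw [sub_self, sub_zero] at hlim
  have key := pos_of_tendsto_of_hasDerivAt_pos
    (F := fun y => cothpRatio p y - 1 - Real.log (y / arsinhp p y))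
    (F' := fun y => (1 + y ^ p - cothpRatio p y ^ 2) / (y * cothpRatio p y * (1 + y ^ p)))
    hlim (fun t ht => ?_) (fun t ht => ?_) hy
  · linarith
  · refine (((hasDerivAt_cothpRatio hp0 ht).sub_const 1).sub
      (hasDerivAt_log_div_arsinhp hp0 ht)).congr_deriv ?_
    have hY : 0 < 1 + t ^ p := by positivity
    have := cothpRatio_pos hp0 ht
    field_simp
    ring
  · have := sub_pos.2 (cothpRatio_sq_lt hp ht)
    have := cothpRatio_pos hp0 ht
    positivity

theorem one_add_rpow_lt_cothpRatio_mul (hp : 1 ≤ p) {y : ℝ} (hy : 0 < y) :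
    1 + y ^ p < cothpRatio p y * (1 + p * y ^ p) := by
  have hp0 : 0 < p := by linarith
  have hYlim := tendsto_rpow_nhdsGT_zero hp0
  have key := pos_of_tendsto_of_hasDerivAt_pos
    (F := fun y => y * (cothpRatio p y * (1 + p * y ^ p) / (1 + y ^ p) - 1))
    (F' := fun y => (p - 1) * y ^ p / (1 + y ^ p)
      + cothpRatio p y * y ^ p * (p ^ 2 - p + 1 + p * y ^ p) / (1 + y ^ p) ^ 2)
    (tendsto_id_mul_nhdsGT_zero ((((tendsto_cothpRatio hp0).mul
      ((hYlim.const_mul p).const_add 1)).div (hYlim.const_add 1) (by simp)).sub_const 1))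
    (fun t ht => ?_) (fun t ht => ?_) hy
  · have hY : 0 < 1 + y ^ p := by positivity
    have : 0 < cothpRatio p y * (1 + p * y ^ p) / (1 + y ^ p) - 1 := pos_of_mul_pos_right key hy.le
    rwa [sub_pos, one_lt_div hY] at this
  · have hY : 0 < 1 + t ^ p := by positivity
    have hYd : HasDerivAt (fun t => t ^ p) (p * t ^ (p - 1)) t :=
      Real.hasDerivAt_rpow_const (Or.inl ht.ne')
    have h := (hasDerivAt_id' t).mul ((((hasDerivAt_cothpRatio hp0 ht).mul
      ((hYd.const_mul p).const_add 1)).div (hYd.const_add 1) hY.ne').sub_const 1)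
    refine h.congr_deriv ?_
    simp only [Pi.mul_apply, Pi.div_apply]
    rw [Real.rpow_sub_one ht.ne']
    field_simp
    ring
  · have := cothpRatio_pos hp0 ht
    have : 0 ≤ (p - 1) * t ^ p := mul_nonneg (by linarith) (by positivity)
    have : 0 < p ^ 2 - p + 1 + p * t ^ p := by nlinarith [Real.rpow_pos_of_pos ht p]
    exact add_pos_of_nonneg_of_pos (by positivity) (by positivity)

theorem add_one_mul_one_add_rpow_lt_cothpRatio_mul (hp : 1 ≤ p) {y : ℝ} (hy : 0 < y) :
    (p + 1) * (1 + y ^ p) < cothpRatio p y * (p + 1 + p * y ^ p) := by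
  have hp0 : 0 < p := by linarith
  have hYlim := tendsto_rpow_nhdsGT_zero hp0
  have key := pos_of_tendsto_of_hasDerivAt_pos
    (F := fun y => y * (cothpRatio p y * (p + 1 + p * y ^ p) / (1 + y ^ p) - (p + 1)))
    (F' := fun y => y ^ p * (cothpRatio p y * (1 + p * y ^ p) - (1 + y ^ p)) / (1 + y ^ p) ^ 2)
    (tendsto_id_mul_nhdsGT_zero ((((tendsto_cothpRatio hp0).mul
      ((hYlim.const_mul p).const_add (p + 1))).div (hYlim.const_add 1) (by simp)).sub_const (p + 1)))
    (fun t ht => ?_) (fun t ht => ?_) hy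
  · have hY : 0 < 1 + y ^ p := by positivity
    have := pos_of_mul_pos_right key hy.le
    rwa [sub_pos, lt_div_iff₀ hY] at this
  · have hY : 0 < 1 + t ^ p := by positivity
    have hYd : HasDerivAt (fun t => t ^ p) (p * t ^ (p - 1)) t :=
      Real.hasDerivAt_rpow_const (Or.inl ht.ne')
    have h := (hasDerivAt_id' t).mul ((((hasDerivAt_cothpRatio hp0 ht).mul
      ((hYd.const_mul p).const_add (p + 1))).div (hYd.const_add 1) hY.ne').sub_const (p + 1))
    refine h.congr_deriv ?_
    simp only [Pi.mul_apply, Pi.div_apply]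
    rw [Real.rpow_sub_one ht.ne']
    field_simp
    ring
  · have := sub_pos.2 (one_add_rpow_lt_cothpRatio_mul hp ht)
    positivity

theorem mul_one_add_rpow_lt_cothpRatio_sq_add (hp : 2 ≤ p) {y : ℝ} (hy : 0 < y) :
    p * (1 + y ^ p) < cothpRatio p y ^ 2 + (p - 1) * (1 + y ^ p) * cothpRatio p y := by
  have hp0 : 0 < p := by linarith
  have hYlim := tendsto_rpow_nhdsGT_zero hp0
  have hR := tendsto_cothpRatio hp0
  have key := pos_of_tendsto_of_hasDerivAt_pos
    (F := fun y => y * (y * ((cothpRatio p y ^ 2 + (p - 1) * (1 + y ^ p) * cothpRatio p y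
      - p * (1 + y ^ p)) / (1 + y ^ p))))
    (F' := fun y => y * ((1 + y ^ p) * (cothpRatio p y * (p + 1 + p * y ^ p) - (p + 1) * (1 + y ^ p))
      + (p - 2) * cothpRatio p y * y ^ p * (1 + y ^ p - cothpRatio p y)) / (1 + y ^ p) ^ 2)
    (tendsto_id_mul_nhdsGT_zero (tendsto_id_mul_nhdsGT_zero
      ((((hR.pow 2).add (((hYlim.const_add 1).const_mul (p - 1)).mul hR)).sub
        ((hYlim.const_add 1).const_mul p)).div (hYlim.const_add 1) (by simp))))
    (fun t ht => ?_) (fun t ht => ?_) hy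
  · have hY : 0 < 1 + y ^ p := by positivity
    have := pos_of_mul_pos_right (pos_of_mul_pos_right key hy.le) hy.le
    rwa [div_pos_iff_of_pos_right hY, sub_pos] at this
  · have hY : 0 < 1 + t ^ p := by positivity
    have hYd : HasDerivAt (fun t => t ^ p) (p * t ^ (p - 1)) t :=
      Real.hasDerivAt_rpow_const (Or.inl ht.ne')
    have hRd := hasDerivAt_cothpRatio hp0 ht
    have h := (hasDerivAt_id' t).mul ((hasDerivAt_id' t).mul
      ((((hRd.pow 2).add (((hYd.const_add 1).const_mul (p - 1)).mul hRd)).sub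
        ((hYd.const_add 1).const_mul p)).div (hYd.const_add 1) hY.ne'))
    refine h.congr_deriv ?_
    simp only [Pi.mul_apply, Pi.div_apply, Pi.add_apply, Pi.sub_apply, Pi.pow_apply,
      Nat.cast_ofNat]
    rw [Real.rpow_sub_one ht.ne']
    field_simp
    ring
  · have hY : 0 < 1 + t ^ p := by positivity
    have hRpos := cothpRatio_pos hp0 ht
    have hsq := cothpRatio_sq_lt hp ht
    have hRY : 0 ≤ 1 + t ^ p - cothpRatio p t := by nlinarith [Real.rpow_nonneg ht.le p]
    have hpsi := sub_pos.2 (add_one_mul_one_add_rpow_lt_cothpRatio_mul (by linarith : 1 ≤ p) ht)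
    have hp2 : 0 ≤ p - 2 := by linarith
    have := add_pos_of_pos_of_nonneg (mul_pos hY hpsi) (by positivity :
      0 ≤ (p - 2) * cothpRatio p t * t ^ p * (1 + t ^ p - cothpRatio p t))
    positivity

theorem cothpRatio_sub_one_div_lt_log_div_arsinhp (hp : 2 ≤ p) {y : ℝ} (hy : 0 < y) :
    1 / p * (cothpRatio p y - 1) < Real.log (y / arsinhp p y) := by
  have hp0 : 0 < p := by linarith
  have hlim := (tendsto_log_div_arsinhp hp0).sub
    (((tendsto_cothpRatio hp0).sub_const 1).const_mul (1 / p))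
  rw [sub_self, mul_zero, sub_zero] at hlim
  have key := pos_of_tendsto_of_hasDerivAt_pos
    (F := fun y => Real.log (y / arsinhp p y) - 1 / p * (cothpRatio p y - 1))
    (F' := fun y => (cothpRatio p y ^ 2 + (p - 1) * (1 + y ^ p) * cothpRatio p y
      - p * (1 + y ^ p)) / (p * y * cothpRatio p y * (1 + y ^ p)))
    hlim (fun t ht => ?_) (fun t ht => ?_) hy
  · linarith
  · refine ((hasDerivAt_log_div_arsinhp hp0 ht).sub
      (((hasDerivAt_cothpRatio hp0 ht).sub_const 1).const_mul (1 / p))).congr_deriv ?_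
    have hY : 0 < 1 + t ^ p := by positivity
    have := cothpRatio_pos hp0 ht
    field_simp
    ring
  · have := sub_pos.2 (mul_one_add_rpow_lt_cothpRatio_sq_add hp ht)
    have := cothpRatio_pos hp0 ht
    positivity

end

theorem stmt_9 (p : ℝ) (hp : 2 ≤ p) (x : ℝ) (hx : 0 < x) :
    Real.exp ((1/p) * (x / tanhp p x - 1)) < sinhp p x / x ∧
    sinhp p x / x < Real.exp (x / tanhp p x - 1) := by
  have hp1 : 1 ≤ p := by linarith
  have hs : 0 < sinhp p x := sinhp_pos hp1 hx
  have hlower := cothpRatio_sub_one_div_lt_log_div_arsinhp hp hs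
  have hupper := log_div_arsinhp_lt_cothpRatio_sub_one hp hs
  rw [arsinhp_sinhp hp1 hx.le, ← div_tanhp_eq_cothpRatio hp1 hx.le] at hlower hupper
  exact ⟨(Real.lt_log_iff_exp_lt (div_pos hs hx)).1 hlower,
    (Real.log_lt_iff_lt_exp (div_pos hs hx)).1 hupper⟩
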